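/- A weakly flattened Fubini ranking with runs of weak ascents cannot contain two distinct runs each of which consists entirely of copies of a single value (i.e., constant runs); equivalently, at most one run consists of entries all of one value. -/

import Mathlib

/-- A Fubini ranking of length `n`: entries in `{1,...,n}` and every value `v`
appearing satisfies `v = 1 + #{j : r_j < v}`. -/
def IsFubini (n : ℕ) (l : List ℕ) : Prop :=
  l.length = n ∧ (∀ x ∈ l, 1 ≤ x ∧ x ≤ n) ∧
    ∀ v ∈ l, v = 1 + l.countP (fun x => decide (x < v))

/-- Split a list (with given head) into maximal runs w.r.t. relation `R`. -/
def runsAux (R : ℕ → ℕ → Bool) : ℕ → List ℕ → List (List ℕ)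
  | a, [] => [[a]]
  | a, b :: l =>
    match runsAux R b l with
    | (c :: r) :: rest =>
        if R a b then (a :: c :: r) :: rest else [a] :: (c :: r) :: rest
    | rs => [a] :: rs

/-- The maximal runs of a list with respect to the relation `R`. -/
def runs (R : ℕ → ℕ → Bool) : List ℕ → List (List ℕ)
  | [] => []
  | a :: l => runsAux R a l

/-- Maximal runs of weak ascents. -/
def weakRuns (l : List ℕ) : List (List ℕ) := runs (fun a b => decide (a ≤ b)) l

/-- Maximal runs of strict ascents. -/
def strictRuns (l : List ℕ) : List (List ℕ) := runs (fun a b => decide (a < b)) l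

/-- Leading terms of a list of runs. -/
def leadingTerms (rs : List (List ℕ)) : List ℕ := rs.map List.headI

/-- Weakly flattened w.r.t. runs of weak ascents. -/
def WeaklyFlattenedWeak (l : List ℕ) : Prop :=
  (leadingTerms (weakRuns l)).Chain' (· ≤ ·)

/-- Flattened w.r.t. runs of weak ascents. -/
def FlattenedWeak (l : List ℕ) : Prop :=
  (leadingTerms (weakRuns l)).Chain' (· < ·)

/-- Weakly flattened w.r.t. runs of strict ascents. -/
def WeaklyFlattenedStrict (l : List ℕ) : Prop :=
  (leadingTerms (strictRuns l)).Chain' (· ≤ ·)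

/-- Flattened w.r.t. runs of strict ascents. -/
def FlattenedStrict (l : List ℕ) : Prop :=
  (leadingTerms (strictRuns l)).Chain' (· < ·)

/-- The content `(c_1, ..., c_n)` of a tuple of length `n`: `c_i` is the number
of entries equal to `i`. -/
def content (l : List ℕ) : List ℕ :=
  (List.range l.length).map (fun i => l.count (i + 1))

/-- The reduced content: multiplicities of the distinct values, in increasing
order of the values. -/
def reducedContent (l : List ℕ) : List ℕ :=
  (l.toFinset.sort (· ≤ ·)).map (fun v => l.count v)

/-- `a_1` copies of `1`, then `a_2` copies of `1 + a_1`, etc. (auxiliary). -/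
def stairsAux : ℕ → List ℕ → List ℕ
  | _, [] => []
  | s, c :: rest => List.replicate c (s + 1) ++ stairsAux (s + c) rest

/-- The weakly increasing tuple with reduced content `a`. -/
def stairs (a : List ℕ) : List ℕ := stairsAux 0 a

/-!
Consecutive runs of weak ascents meet at a strict descent: the last entry of a run exceeds the
first entry of the next one. A constant run ends with its leading term, so if another run
followed it, that run would start strictly below it, against weak flatness. Hence a constant run
is the last run, and there is at most one.
-/

namespace List

theorem getLastD_eq_headI_of_forall_eq_headI {α : Type*} [Inhabited α] {u : List α}
    (hu : u ≠ []) (hc : ∀ x ∈ u, x = u.headI) (d : α) : u.getLastD d = u.headI := by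
  rw [getLastD_eq_getLast?, getLast?_eq_some_getLast hu]
  exact hc _ (getLast_mem hu)

end List

section Runs

variable (R : ℕ → ℕ → Bool)

theorem runsAux_eq_cons (a : ℕ) (l : List ℕ) : ∃ r rest, runsAux R a l = (a :: r) :: rest := by
  induction l generalizing a with
  | nil => exact ⟨[], [], rfl⟩
  | cons b l ih =>
    obtain ⟨r, rest, h⟩ := ih b
    by_cases hab : R a b <;> simp [runsAux, h, hab]

theorem runsAux_cons_of_eq {a b : ℕ} {l r : List ℕ} {rest : List (List ℕ)}
    (h : runsAux R b l = (b :: r) :: rest) :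
    runsAux R a (b :: l) =
      if R a b then (a :: b :: r) :: rest else [a] :: (b :: r) :: rest := by
  simp only [runsAux, h]

theorem nil_not_mem_runsAux (a : ℕ) (l : List ℕ) : [] ∉ runsAux R a l := by
  induction l generalizing a with
  | nil => simp [runsAux]
  | cons b l ih =>
    obtain ⟨r, rest, h⟩ := runsAux_eq_cons R b l
    have hrest : [] ∉ rest := fun hmem => ih b (h ▸ List.mem_cons_of_mem _ hmem)
    rw [runsAux_cons_of_eq R h]
    split_ifs <;> simp [hrest]

theorem runsAux_isChain (a : ℕ) (l : List ℕ) :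
    (runsAux R a l).IsChain (fun u v => R (u.getLastD 0) v.headI = false) := by
  induction l generalizing a with
  | nil => simp [runsAux]
  | cons b l ih =>
    obtain ⟨r, rest, h⟩ := runsAux_eq_cons R b l
    have hchain := ih b
    rw [h] at hchain
    rw [runsAux_cons_of_eq R h]
    split_ifs with hab
    · cases rest with
      | nil => simp
      | cons s rest => simpa [List.isChain_cons_cons] using hchain
    · simpa [List.isChain_cons_cons, hab] using hchain

theorem nil_not_mem_runs (l : List ℕ) : [] ∉ runs R l := by
  cases l with
  | nil => simp [runs]
  | cons a l => exact nil_not_mem_runsAux R a l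

theorem runs_isChain (l : List ℕ) :
    (runs R l).IsChain (fun u v => R (u.getLastD 0) v.headI = false) := by
  cases l with
  | nil => simp [runs]
  | cons a l => exact runsAux_isChain R a l

end Runs

theorem weakRuns_isChain (l : List ℕ) :
    (weakRuns l).IsChain (fun u v => v.headI < u.getLastD 0) :=
  (runs_isChain _ l).imp fun _ _ h => by simpa using h

theorem WeaklyFlattenedWeak.add_one_eq_length_of_constant {l : List ℕ}
    (hw : WeaklyFlattenedWeak l) {k : ℕ} (hk : k < (weakRuns l).length)
    (hc : ∀ x ∈ (weakRuns l)[k], x = ((weakRuns l)[k]).headI) :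
    k + 1 = (weakRuns l).length := by
  by_contra hne
  have hk1 : k + 1 < (weakRuns l).length := by omega
  have hdescent : ((weakRuns l)[k + 1]).headI < ((weakRuns l)[k]).getLastD 0 :=
    List.isChain_iff_getElem.mp (weakRuns_isChain l) k hk1
  have hflat : ((weakRuns l)[k]).headI ≤ ((weakRuns l)[k + 1]).headI := by
    simpa [leadingTerms] using
      List.isChain_iff_getElem.mp hw k (by simpa [leadingTerms] using hk1)
  have hrun : (weakRuns l)[k] ≠ [] := fun h => nil_not_mem_runs _ l (h ▸ List.getElem_mem hk)
  rw [List.getLastD_eq_headI_of_forall_eq_headI hrun hc] at hdescent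
  omega

theorem at_most_one_constant_run_general (l : List ℕ)
    (hw : WeaklyFlattenedWeak l) (i j : ℕ)
    (hi : i < (weakRuns l).length) (hj : j < (weakRuns l).length)
    (hci : ∀ x ∈ (weakRuns l)[i], x = ((weakRuns l)[i]).headI)
    (hcj : ∀ x ∈ (weakRuns l)[j], x = ((weakRuns l)[j]).headI) :
    i = j := by
  have hi_last := hw.add_one_eq_length_of_constant hi hci
  have hj_last := hw.add_one_eq_length_of_constant hj hcj
  omega

theorem at_most_one_constant_run (n : ℕ) (l : List ℕ) (hf : IsFubini n l)
    (hw : WeaklyFlattenedWeak l) (i j : ℕ)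
    (hi : i < (weakRuns l).length) (hj : j < (weakRuns l).length)
    (hci : ∀ x ∈ (weakRuns l)[i], x = ((weakRuns l)[i]).headI)
    (hcj : ∀ x ∈ (weakRuns l)[j], x = ((weakRuns l)[j]).headI) :
    i = j :=
  at_most_one_constant_run_general l hw i j hi hj hci hcj
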